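/- arXiv:1210.7581 — 5 statements merged into one kernel-verified Lean document; each statement's English description precedes it below -/
import Mathlib

section
/- Let (Ω, ℬ, P) be a non-atomic probability space, let Y ∈ L^∞(Ω, P) be real-valued, and fix s ∈ [0,1]. Let K = {Z ∈ L^∞(Ω, P) : 0 ≤ Z ≤ 1 a.e. and ∫ Z dP ≥ s}. Then the extreme points of the convex set K are exactly the indicator functions 1_E with E ∈ ℬ and P(E) ≥ s. -/
/-!
An indicator takes values in `{0, 1}`, the extreme points of `[0, 1]`, so a.e. along any open
segment through it the endpoints agree with it. Conversely, if an extreme point `Z` took values in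
`(0, 1)` on a non-null set, it would take values in `[ε, 1 - ε]` on a non-null set `A`. Splitting
`A` into two non-null parts `F, G` by non-atomicity gives the mean-zero perturbation
`W = ε (P(G) 1_F - P(F) 1_G)` with `|W| ≤ ε 1_A`, so `Z ± W` both stay in `K` and `Z` is their
midpoint.
-/

open MeasureTheory Set

theorem eq_zero_of_mem_extremePoints_of_add_mem_of_sub_mem {𝕜 E : Type*} [Field 𝕜]
    [LinearOrder 𝕜] [IsStrictOrderedRing 𝕜] [AddCommGroup E] [Module 𝕜 E] {A : Set E} {x w : E}
    (hx : x ∈ A.extremePoints 𝕜) (hadd : x + w ∈ A) (hsub : x - w ∈ A) : w = 0 := by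
  have hseg : x ∈ openSegment 𝕜 (x + w) (x - w) :=
    ⟨1 / 2, 1 / 2, by norm_num, by norm_num, by norm_num, by module⟩
  simpa using hx.2 hadd hsub hseg

namespace MeasureTheory

theorem Lp.mem_extremePoints_of_ae_mem_extremePoints {α E : Type*} [MeasurableSpace α]
    {μ : Measure α} [NormedAddCommGroup E] [NormedSpace ℝ E] {p : ENNReal} {C : Set E}
    {f : Lp E p μ} (hf : ∀ᵐ a ∂μ, f a ∈ C.extremePoints ℝ) :
    f ∈ {g : Lp E p μ | ∀ᵐ a ∂μ, g a ∈ C}.extremePoints ℝ := by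
  refine ⟨hf.mono fun a ha => ha.1, fun g₁ hg₁ g₂ hg₂ ⟨a, b, ha, hb, hab, hfab⟩ => Lp.ext ?_⟩
  subst hfab
  filter_upwards [hf, hg₁, hg₂, Lp.coeFn_add (a • g₁) (b • g₂), Lp.coeFn_smul a g₁,
    Lp.coeFn_smul b g₂] with x hfx hg₁x hg₂x hadd hsmul₁ hsmul₂
  refine hfx.2 hg₁x hg₂x ⟨a, b, ha, hb, hab, ?_⟩
  rw [hadd, Pi.add_apply, hsmul₁, hsmul₂, Pi.smul_apply, Pi.smul_apply]

variable {Ω : Type*} [MeasurableSpace Ω]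

/-- Stronger than `NoAtoms`, which only asks singletons to be null. -/
def Measure.IsAtomless (P : Measure Ω) : Prop :=
  ∀ E : Set Ω, MeasurableSet E → P E ≠ 0 →
    ∃ F : Set Ω, MeasurableSet F ∧ F ⊆ E ∧ 0 < P F ∧ P F < P E

variable {P : Measure Ω}

theorem exists_measure_preimage_Icc_ne_zero {f : Ω → ℝ} {a b : ℝ} (h : P (f ⁻¹' Ioo a b) ≠ 0) :
    ∃ ε > 0, P (f ⁻¹' Icc (a + ε) (b - ε)) ≠ 0 := by
  by_contra! hnull
  have hcover : Ioo a b ⊆ ⋃ n : ℕ, Icc (a + 1 / (n + 1)) (b - 1 / (n + 1)) := by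
    intro x ⟨hax, hxb⟩
    obtain ⟨n, hn⟩ := exists_nat_one_div_lt (lt_min (sub_pos.2 hax) (sub_pos.2 hxb))
    exact mem_iUnion.2 ⟨n, by linarith [min_le_left (x - a) (b - x)],
      by linarith [min_le_right (x - a) (b - x)]⟩
  refine h (measure_mono_null (preimage_mono hcover) ?_)
  rw [preimage_iUnion]
  exact measure_iUnion_null fun n => hnull _ Nat.one_div_pos_of_nat

theorem Measure.IsAtomless.exists_disjoint_subsets (hP : P.IsAtomless) {A : Set Ω}
    (hA : MeasurableSet A) (hA0 : P A ≠ 0) :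
    ∃ F G : Set Ω, MeasurableSet F ∧ MeasurableSet G ∧ F ⊆ A ∧ G ⊆ A ∧ Disjoint F G ∧
      P F ≠ 0 ∧ P G ≠ 0 := by
  obtain ⟨F, hF, hFA, hF0, hFA_lt⟩ := hP A hA hA0
  refine ⟨F, A \ F, hF, hA.diff hF, hFA, sdiff_subset, disjoint_sdiff_right, hF0.ne',
    fun hG0 => hFA_lt.ne ?_⟩
  rw [← measure_inter_add_sdiff A hF, inter_eq_self_of_subset_right hFA, hG0, add_zero]

theorem Measure.IsAtomless.exists_Lp_ne_zero_integral_eq_zero [IsProbabilityMeasure P]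
    (hP : P.IsAtomless) {A : Set Ω} (hA : MeasurableSet A) (hA0 : P A ≠ 0) {c : ℝ}
    (hc : 0 < c) :
    ∃ W : Lp ℝ ⊤ P, W ≠ 0 ∧ ∫ ω, W ω ∂P = 0 ∧ ∀ᵐ ω ∂P, |W ω| ≤ A.indicator (fun _ => c) ω := by
  obtain ⟨F, G, hF, hG, hFA, hGA, hFG, hF0, hG0⟩ := hP.exists_disjoint_subsets hA hA0
  -- the weights `P G` on `F` and `-P F` on `G` make the integral vanish
  set w : Ω → ℝ := fun ω =>
    F.indicator (fun _ => c * P.real G) ω - G.indicator (fun _ => c * P.real F) ω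
  set W : Lp ℝ ⊤ P := indicatorConstLp ⊤ hF (measure_ne_top P F) (c * P.real G) -
    indicatorConstLp ⊤ hG (measure_ne_top P G) (c * P.real F)
  have hW : W =ᵐ[P] w := by
    filter_upwards [Lp.coeFn_sub (indicatorConstLp ⊤ hF (measure_ne_top P F) (c * P.real G))
        (indicatorConstLp ⊤ hG (measure_ne_top P G) (c * P.real F)),
      indicatorConstLp_coeFn (p := ⊤) (hs := hF) (hμs := measure_ne_top P F) (c := c * P.real G),
      indicatorConstLp_coeFn (p := ⊤) (hs := hG) (hμs := measure_ne_top P G) (c := c * P.real F)]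
      with ω hsub hFω hGω
    rw [hsub, Pi.sub_apply, hFω, hGω]
  have hw_of_mem_F {ω} (hω : ω ∈ F) : w ω = c * P.real G := by
    simp [w, hω, hFG.notMem_of_mem_left hω]
  have hw_of_mem_G {ω} (hω : ω ∈ G) : w ω = -(c * P.real F) := by
    simp [w, hω, hFG.notMem_of_mem_right hω]
  have hW0 : W ≠ 0 := by
    intro hW_eq
    have hw0 : ∀ᵐ ω ∂P, w ω = 0 := by
      rw [hW_eq] at hW
      exact hW.symm.trans (Lp.coeFn_zero ..)
    refine hF0 (measure_mono_null (fun ω hω => ?_) (ae_iff.1 hw0))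
    show w ω ≠ 0
    rw [hw_of_mem_F hω]
    exact (mul_pos hc (ENNReal.toReal_pos hG0 (measure_ne_top P G))).ne'
  refine ⟨W, hW0, ?_, ?_⟩
  · rw [integral_congr_ae hW, integral_sub ((integrable_const _).indicator hF)
      ((integrable_const _).indicator hG), integral_indicator_const _ hF,
      integral_indicator_const _ hG, smul_eq_mul, smul_eq_mul]
    ring
  · have hcP (E : Set Ω) : |c * P.real E| ≤ c := by
      rw [abs_of_nonneg (by positivity)]
      exact mul_le_of_le_one_right hc.le measureReal_le_one
    filter_upwards [hW] with ω hWω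
    rw [hWω]
    by_cases hωF : ω ∈ F
    · rw [hw_of_mem_F hωF, indicator_of_mem (hFA hωF)]
      exact hcP G
    by_cases hωG : ω ∈ G
    · rw [hw_of_mem_G hωG, indicator_of_mem (hGA hωG), abs_neg]
      exact hcP F
    simp [w, hωF, hωG, indicator_nonneg (fun _ _ => hc.le)]

theorem integral_eq_measureReal_of_ae_eq_indicator {μ : Measure Ω} {f : Ω → ℝ} {E : Set Ω}
    (hE : MeasurableSet E) (hfE : f =ᵐ[μ] E.indicator fun _ => 1) : ∫ ω, f ω ∂μ = μ.real E :=
  (integral_congr_ae hfE).trans (integral_indicator_one hE)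

variable (P) in
def fractionalEvents (s : ℝ) : Set (Lp ℝ ⊤ P) :=
  {Z | (∀ᵐ ω ∂P, 0 ≤ Z ω ∧ Z ω ≤ 1) ∧ s ≤ ∫ ω, Z ω ∂P}

namespace fractionalEvents

variable {s : ℝ}

theorem add_mem [IsFiniteMeasure P] {Z W : Lp ℝ ⊤ P} (hZ : Z ∈ fractionalEvents P s)
    (hW : ∫ ω, W ω ∂P = 0) (hZW : ∀ᵐ ω ∂P, 0 ≤ Z ω + W ω ∧ Z ω + W ω ≤ 1) :
    Z + W ∈ fractionalEvents P s := by
  have hint : ∫ ω, (Z + W) ω ∂P = ∫ ω, Z ω ∂P := by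
    rw [integral_congr_ae (Lp.coeFn_add Z W), Pi.add_def,
      integral_add ((Lp.memLp Z).integrable le_top) ((Lp.memLp W).integrable le_top), hW,
      add_zero]
  refine ⟨?_, hint ▸ hZ.2⟩
  filter_upwards [hZW, Lp.coeFn_add Z W] with ω hω hadd
  rwa [hadd]

theorem add_mem_and_sub_mem [IsFiniteMeasure P] {Z W : Lp ℝ ⊤ P}
    (hZ : Z ∈ fractionalEvents P s) (hW : ∫ ω, W ω ∂P = 0)
    (hWZ : ∀ᵐ ω ∂P, |W ω| ≤ min (Z ω) (1 - Z ω)) :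
    Z + W ∈ fractionalEvents P s ∧ Z - W ∈ fractionalEvents P s := by
  refine ⟨add_mem hZ hW ?_, sub_eq_add_neg Z W ▸ add_mem hZ ?_ ?_⟩
  · filter_upwards [hWZ] with ω hω
    constructor <;> linarith [abs_le.1 (hω.trans (min_le_left _ _)),
      abs_le.1 (hω.trans (min_le_right _ _))]
  · rw [integral_congr_ae (Lp.coeFn_neg W), Pi.neg_def, integral_neg, hW, neg_zero]
  · filter_upwards [hWZ, Lp.coeFn_neg W] with ω hω hneg
    rw [hneg, Pi.neg_apply]
    constructor <;> linarith [abs_le.1 (hω.trans (min_le_left _ _)),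
      abs_le.1 (hω.trans (min_le_right _ _))]

theorem ae_eq_zero_or_one_of_mem_extremePoints [IsProbabilityMeasure P] (hP : P.IsAtomless)
    {Z : Lp ℝ ⊤ P} (hZ : Z ∈ (fractionalEvents P s).extremePoints ℝ) :
    ∀ᵐ ω ∂P, Z ω = 0 ∨ Z ω = 1 := by
  have hnull : P (Z ⁻¹' Ioo 0 1) = 0 := by
    by_contra hpos
    obtain ⟨ε, hε, hA⟩ := exists_measure_preimage_Icc_ne_zero hpos
    obtain ⟨W, hW0, hWint, hWA⟩ := hP.exists_Lp_ne_zero_integral_eq_zero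
      ((Lp.stronglyMeasurable Z).measurable measurableSet_Icc) hA hε
    have hWZ : ∀ᵐ ω ∂P, |W ω| ≤ min (Z ω) (1 - Z ω) := by
      filter_upwards [hWA, hZ.1.1] with ω hω hZω
      refine hω.trans ?_
      by_cases hωA : ω ∈ Z ⁻¹' Icc (0 + ε) (1 - ε)
      · rw [indicator_of_mem hωA]
        exact le_min (by linarith [hωA.1]) (by linarith [hωA.2])
      · rw [indicator_of_notMem hωA]
        exact le_min hZω.1 (sub_nonneg.2 hZω.2)
    obtain ⟨hadd, hsub⟩ := add_mem_and_sub_mem hZ.1 hWint hWZ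
    exact hW0 (eq_zero_of_mem_extremePoints_of_add_mem_of_sub_mem hZ hadd hsub)
  filter_upwards [hZ.1.1, measure_eq_zero_iff_ae_notMem.1 hnull] with ω hZω hω
  by_contra! hne
  exact hω ⟨hZω.1.lt_of_ne' hne.1, hZω.2.lt_of_ne hne.2⟩

theorem exists_ae_eq_indicator_of_mem_extremePoints [IsProbabilityMeasure P]
    (hP : P.IsAtomless) {Z : Lp ℝ ⊤ P} (hZ : Z ∈ (fractionalEvents P s).extremePoints ℝ) :
    ∃ E : Set Ω, MeasurableSet E ∧ s ≤ P.real E ∧ Z =ᵐ[P] E.indicator fun _ => 1 := by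
  have hE : MeasurableSet (Z ⁻¹' {1}) :=
    (Lp.stronglyMeasurable Z).measurable (measurableSet_singleton 1)
  have hZE : Z =ᵐ[P] (Z ⁻¹' {1}).indicator fun _ => 1 := by
    filter_upwards [ae_eq_zero_or_one_of_mem_extremePoints hP hZ] with ω hω
    rcases hω with hω | hω <;> simp [hω]
  exact ⟨Z ⁻¹' {1}, hE, integral_eq_measureReal_of_ae_eq_indicator hE hZE ▸ hZ.1.2, hZE⟩

theorem mem_extremePoints_of_ae_eq_indicator {Z : Lp ℝ ⊤ P} {E : Set Ω} (hE : MeasurableSet E)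
    (hsE : s ≤ P.real E) (hZE : Z =ᵐ[P] E.indicator fun _ => 1) :
    Z ∈ (fractionalEvents P s).extremePoints ℝ := by
  have hZ01 : ∀ᵐ ω ∂P, Z ω ∈ (Icc (0 : ℝ) 1).extremePoints ℝ := by
    filter_upwards [hZE] with ω hω
    rw [hω, extremePoints_Icc zero_le_one]
    by_cases hωE : ω ∈ E <;> simp [hωE]
  exact inter_extremePoints_subset_extremePoints_of_subset (fun g hg => hg.1)
    ⟨⟨hZ01.mono fun ω hω => hω.1, integral_eq_measureReal_of_ae_eq_indicator hE hZE ▸ hsE⟩,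
      Lp.mem_extremePoints_of_ae_mem_extremePoints hZ01⟩

end fractionalEvents

end MeasureTheory

theorem stmt_5_general {Ω : Type*} [MeasurableSpace Ω] (P : Measure Ω) [IsProbabilityMeasure P]
    (hna : ∀ E : Set Ω, MeasurableSet E → P E ≠ 0 →
      ∃ F : Set Ω, MeasurableSet F ∧ F ⊆ E ∧ 0 < P F ∧ P F < P E)
    (s : ℝ)
    (K : Set (Lp ℝ ⊤ P))
    (hK : K = {Z : Lp ℝ ⊤ P | (∀ᵐ ω ∂P, 0 ≤ Z ω ∧ Z ω ≤ 1) ∧ s ≤ ∫ ω, Z ω ∂P}) :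
    Set.extremePoints ℝ K =
      {Z : Lp ℝ ⊤ P | ∃ E : Set Ω, MeasurableSet E ∧ s ≤ (P E).toReal ∧
        ∀ᵐ ω ∂P, Z ω = Set.indicator E (fun _ => (1 : ℝ)) ω} := by
  obtain rfl : K = fractionalEvents P s := hK
  ext Z
  exact ⟨fractionalEvents.exists_ae_eq_indicator_of_mem_extremePoints hna,
    fun ⟨E, hE, hsE, hZE⟩ => fractionalEvents.mem_extremePoints_of_ae_eq_indicator hE hsE hZE⟩

theorem stmt_5 {Ω : Type*} [MeasurableSpace Ω] (P : Measure Ω) [IsProbabilityMeasure P]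
    (hna : ∀ E : Set Ω, MeasurableSet E → P E ≠ 0 →
      ∃ F : Set Ω, MeasurableSet F ∧ F ⊆ E ∧ 0 < P F ∧ P F < P E)
    (Y : Lp ℝ ⊤ P) (s : ℝ) (hs : s ∈ Set.Icc (0 : ℝ) 1)
    (K : Set (Lp ℝ ⊤ P))
    (hK : K = {Z : Lp ℝ ⊤ P | (∀ᵐ ω ∂P, 0 ≤ Z ω ∧ Z ω ≤ 1) ∧ s ≤ ∫ ω, Z ω ∂P}) :
    Set.extremePoints ℝ K =
      {Z : Lp ℝ ⊤ P | ∃ E : Set Ω, MeasurableSet E ∧ s ≤ (P E).toReal ∧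
        ∀ᵐ ω ∂P, Z ω = Set.indicator E (fun _ => (1 : ℝ)) ω} :=
  stmt_5_general P hna s K hK
end

section
/- Let a be a Hermitian matrix in M_n(ℂ) with distinct eigenvalues λ₁ < λ₂ < ⋯ < λ_n, and let 1 ≤ j ≤ n. If p₀ is an orthogonal projection of rank ≥ j minimizing Tr(a p) over all projections p of rank ≥ j, then p₀ commutes with a. -/
/-!
Put `c = a p₀ - p₀ a`, which is skew-Hermitian. The unitaries `exp (t c)` conjugate `p₀` into
projections of the same rank, so `t ↦ Re Tr (a exp (t c) p₀ exp (t c)ᴴ)` is minimal at `t = 0`.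
Its derivative there is `Re Tr (cᴴ c) = ∑ |cᵢⱼ|²`, hence `c = 0`.
-/

open Matrix NormedSpace

namespace Matrix

variable {m n : Type*} [Fintype m] [Fintype n]

open ComplexOrder in
theorem eq_zero_of_re_trace_conjTranspose_mul_self_eq_zero {c : Matrix m n ℂ}
    (h : (cᴴ * c).trace.re = 0) : c = 0 := by
  have hnonneg : 0 ≤ (cᴴ * c).trace := (posSemidef_conjTranspose_mul_self c).trace_nonneg
  rw [← trace_conjTranspose_mul_self_eq_zero_iff]
  exact Complex.ext h (Complex.nonneg_iff.mp hnonneg).2.symm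

variable [DecidableEq n]

theorem rank_mul_mul_star_of_mem_unitaryGroup {R : Type*} [CommRing R] [StarRing R]
    {u : Matrix n n R} (hu : u ∈ unitaryGroup n R) (p : Matrix n n R) :
    (u * p * star u).rank = p.rank := by
  have isUnit_det {v : Matrix n n R} (hv : v ∈ unitaryGroup n R) : IsUnit v.det :=
    (isUnit_iff_isUnit_det v).mp (Unitary.isUnit_coe (U := ⟨v, hv⟩))
  rw [mul_assoc, rank_mul_eq_right_of_isUnit_det _ _ (isUnit_det hu),
    rank_mul_eq_left_of_isUnit_det _ _ (isUnit_det (Unitary.star_mem hu))]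

theorem exp_smul_mem_unitaryGroup {M : Matrix n n ℂ} (hM : Mᴴ = -M) (t : ℝ) :
    exp (t • M) ∈ unitaryGroup n ℂ := by
  rw [mem_unitaryGroup_iff', star_eq_conjTranspose, ← exp_conjTranspose, conjTranspose_smul, hM,
    star_trivial, smul_neg, ← exp_add_of_commute _ _ (Commute.refl (t • M)).neg_left,
    neg_add_cancel, exp_zero]

theorem hasDerivAt_re_trace_mul_exp_smul_conj (a M p : Matrix n n ℂ) :
    HasDerivAt (fun t : ℝ => (trace (a * (exp (t • M) * p * exp (t • Mᴴ)))).re)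
      (trace (a * (M * p + p * Mᴴ))).re 0 := by
  -- any norm on matrices will do: the statement only involves the real-valued function
  let _ : NormedRing (Matrix n n ℂ) := Matrix.linftyOpNormedRing
  let _ : NormedAlgebra ℝ (Matrix n n ℂ) := Matrix.linftyOpNormedAlgebra
  have hexp (X : Matrix n n ℂ) := by
    simpa using hasDerivAt_exp_smul_const (𝕂 := ℝ) X 0
  have hconj := (((hexp M).mul_const p).mul (hexp Mᴴ)).congr_deriv
    (g' := M * p + p * Mᴴ) (by simp)
  let L : Matrix n n ℂ →ₗ[ℝ] ℝ :=
    Complex.reLm ∘ₗ (traceLinearMap n ℂ ℂ).restrictScalars ℝ ∘ₗ LinearMap.mulLeft ℝ a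
  exact L.toContinuousLinearMap.hasFDerivAt.comp_hasDerivAt 0 hconj

theorem commute_of_isMinOn_re_trace_mul {S : Set (Matrix n n ℂ)} {a p₀ : Matrix n n ℂ}
    (ha : a.IsHermitian) (hp₀ : p₀.IsHermitian)
    (hS : ∀ u ∈ unitaryGroup n ℂ, ∀ p ∈ S, u * p * star u ∈ S) (hp₀S : p₀ ∈ S)
    (hmin : IsMinOn (fun p => (trace (a * p)).re) S p₀) : Commute a p₀ := by
  set c := a * p₀ - p₀ * a with hc_def
  have hc : cᴴ = -c := by
    rw [hc_def, conjTranspose_sub, conjTranspose_mul, conjTranspose_mul, ha.eq, hp₀.eq, neg_sub]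
  have hconj (t : ℝ) : exp (t • c) * p₀ * exp (t • cᴴ) ∈ S := by
    have := hS _ (exp_smul_mem_unitaryGroup hc t) p₀ hp₀S
    rwa [star_eq_conjTranspose, ← exp_conjTranspose, conjTranspose_smul, star_trivial] at this
  have hlocal : IsLocalMin (fun t : ℝ => (trace (a * (exp (t • c) * p₀ * exp (t • cᴴ)))).re) 0 :=
    Filter.Eventually.of_forall fun t => by simpa using hmin (hconj t)
  have hderiv := hlocal.hasDerivAt_eq_zero (hasDerivAt_re_trace_mul_exp_smul_conj a c p₀)
  have htrace : trace (a * (c * p₀ + p₀ * cᴴ)) = trace (cᴴ * c) :=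
    calc trace (a * (c * p₀ + p₀ * cᴴ)) = trace (p₀ * a * c) - trace (a * p₀ * c) := by
          rw [hc, mul_neg, mul_add, mul_neg, trace_add, trace_neg, ← sub_eq_add_neg,
            ← mul_assoc, trace_mul_comm, ← mul_assoc, ← mul_assoc]
      _ = trace (cᴴ * c) := by rw [hc, hc_def, neg_sub, sub_mul, trace_sub]
  rw [htrace] at hderiv
  exact sub_eq_zero.mp (eq_zero_of_re_trace_conjTranspose_mul_self_eq_zero hderiv)

end Matrix

theorem stmt_7_general {n : ℕ} (a : Matrix (Fin n) (Fin n) ℂ) (ha : a.IsHermitian)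
    (j : ℕ)
    (p₀ : Matrix (Fin n) (Fin n) ℂ) (hp₀proj : p₀ * p₀ = p₀) (hp₀sa : p₀.IsHermitian)
    (hp₀rank : j ≤ p₀.rank)
    (hmin : ∀ p : Matrix (Fin n) (Fin n) ℂ, p * p = p → p.IsHermitian → j ≤ p.rank →
      (Matrix.trace (a * p₀)).re ≤ (Matrix.trace (a * p)).re) :
    a * p₀ = p₀ * a := by
  refine commute_of_isMinOn_re_trace_mul (S := {p | IsStarProjection p ∧ j ≤ p.rank}) ha hp₀sa
    ?_ ⟨⟨hp₀proj, hp₀sa⟩, hp₀rank⟩ fun p hp => hmin p hp.1.1 hp.1.2 hp.2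
  rintro u hu p ⟨hp, hrank⟩
  exact ⟨hp.map (Unitary.conjStarAlgAut ℂ _ ⟨u, hu⟩),
    (rank_mul_mul_star_of_mem_unitaryGroup hu p).trans_ge hrank⟩

theorem stmt_7 {n : ℕ} (a : Matrix (Fin n) (Fin n) ℂ) (ha : a.IsHermitian)
    (lam : Fin n → ℝ) (hlam : StrictMono lam)
    (U : Matrix (Fin n) (Fin n) ℂ) (hU : U ∈ Matrix.unitaryGroup (Fin n) ℂ)
    (hdiag : a = U * Matrix.diagonal (fun i => (lam i : ℂ)) * star U)
    (j : ℕ) (hj1 : 1 ≤ j) (hjn : j ≤ n)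
    (p₀ : Matrix (Fin n) (Fin n) ℂ) (hp₀proj : p₀ * p₀ = p₀) (hp₀sa : p₀.IsHermitian)
    (hp₀rank : j ≤ p₀.rank)
    (hmin : ∀ p : Matrix (Fin n) (Fin n) ℂ, p * p = p → p.IsHermitian → j ≤ p.rank →
      (Matrix.trace (a * p₀)).re ≤ (Matrix.trace (a * p)).re) :
    a * p₀ = p₀ * a :=
  stmt_7_general a ha j p₀ hp₀proj hp₀sa hp₀rank hmin
end

section
/- Let a be a Hermitian matrix in M_n(ℂ) with distinct eigenvalues λ₁ < ⋯ < λ_n, and let i, j ≥ 1 with i + j − 1 ≤ n. Then λ_i + λ_{i+1} + ⋯ + λ_{i+j−1} = max over projections r of rank ≥ n − i + 1 of (min over projections q ≤ r of rank j of Tr(a q)). -/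
/-!
Conjugation by a unitary is a ⋆-automorphism preserving rank and trace, so it does not change the
max–min set and we may take `a = diagonal λ`. For a projection `q` the diagonal entries
`w t = (q t t).re` lie in `[0, 1]` and sum to `rank q = j`, so `Tr (a q) = ∑ λ_t w_t`, and a
bathtub argument compares this weighted sum with a sum of `j` consecutive eigenvalues.
The projection `r` onto the last `n - i + 1` coordinates forces `w` onto those coordinates, so every
admissible `q` has `Tr (a q) ≥ λ_i + ⋯ + λ_{i+j-1}`, with equality for the projection onto that
window. Conversely any `r` of rank `≥ n - i + 1` meets the span of the first `i + j - 1`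
coordinates in dimension `≥ j`, which gives an admissible `q` with `Tr (a q) ≤ λ_i + ⋯ + λ_{i+j-1}`.
-/

open Matrix Finset Module

theorem sum_le_sum_mul_of_threshold {ι : Type*} [Fintype ι] (T : Finset ι) (lam w : ι → ℝ)
    (c : ℝ) (hw₀ : ∀ t, 0 ≤ w t) (hw₁ : ∀ t, w t ≤ 1) (hw : ∑ t, w t = #T)
    (hT : ∀ t ∈ T, lam t ≤ c) (hTc : ∀ t ∉ T, w t ≠ 0 → c ≤ lam t) :
    ∑ t ∈ T, lam t ≤ ∑ t, lam t * w t := by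
  classical
  -- each term `(λ_t - c) (w_t - 1_T t)` is nonnegative, and their sum is the difference
  have hterm : ∀ t, 0 ≤ (lam t - c) * (w t - if t ∈ T then 1 else 0) := by
    intro t
    by_cases ht : t ∈ T
    · simp only [ht, if_true]
      exact mul_nonneg_of_nonpos_of_nonpos (by linarith [hT t ht]) (by linarith [hw₁ t])
    · by_cases hwt : w t = 0
      · simp [hwt, ht]
      · simp only [ht, if_false, sub_zero]
        exact mul_nonneg (by linarith [hTc t ht hwt]) (hw₀ t)
  have hsum : ∑ t, (lam t - c) * (w t - if t ∈ T then 1 else 0)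
      = ∑ t, lam t * w t - ∑ t ∈ T, lam t := by
    simp only [mul_sub, sub_mul, mul_ite, mul_one, mul_zero, sum_sub_distrib, ← mul_sum, hw,
      sum_ite_mem, univ_inter, sum_const, nsmul_eq_mul]
    ring
  linarith [sum_nonneg fun t (_ : t ∈ univ) => hterm t]

lemma Submodule.exists_le_finrank_eq {K V : Type*} [DivisionRing K] [AddCommGroup V]
    [Module K V] (W : Submodule K V) {j : ℕ} (hj : j ≤ finrank K W) :
    ∃ U ≤ W, finrank K U = j := by
  obtain ⟨f, hf⟩ := exists_linearIndependent_of_le_finrank hj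
  refine ⟨span K (Set.range (W.subtype ∘ f)), span_le.mpr ?_, ?_⟩
  · rintro _ ⟨k, rfl⟩
    exact (f k).2
  · rw [finrank_span_eq_card (hf.map' W.subtype W.ker_subtype), Fintype.card_fin]

lemma Submodule.starProjection_mul_eq_of_le_range {E : Type*} [NormedAddCommGroup E]
    [InnerProductSpace ℂ E] [CompleteSpace E] {K : Submodule ℂ E} [K.HasOrthogonalProjection]
    {R : E →L[ℂ] E} (hR : IsStarProjection R) (hK : K ≤ R.range) :
    K.starProjection * R = K.starProjection := by
  obtain ⟨_, hR'⟩ := isStarProjection_iff_eq_starProjection_range.mp hR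
  rw [hR']
  exact starProjection_comp_starProjection_of_le hK

lemma ContinuousLinearMap.exists_isStarProjection_mul_eq_of_le_finrank_add {E : Type*}
    [NormedAddCommGroup E] [InnerProductSpace ℂ E] [FiniteDimensional ℂ E] {R P : E →L[ℂ] E}
    (hR : IsStarProjection R) (hP : IsStarProjection P) {j : ℕ}
    (hj : j + finrank ℂ E ≤ finrank ℂ R.range + finrank ℂ P.range) :
    ∃ Q : E →L[ℂ] E, IsStarProjection Q ∧ Q * R = Q ∧ Q * P = Q ∧ finrank ℂ Q.range = j := by
  have hRP : j ≤ finrank ℂ (R.range ⊓ P.range : Submodule ℂ E) := by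
    have := Submodule.finrank_sup_add_finrank_inf_eq R.range P.range
    have := Submodule.finrank_le (R.range ⊔ P.range)
    omega
  obtain ⟨K, hK, rfl⟩ := Submodule.exists_le_finrank_eq _ hRP
  exact ⟨K.starProjection, isStarProjection_starProjection,
    K.starProjection_mul_eq_of_le_range hR (hK.trans inf_le_left),
    K.starProjection_mul_eq_of_le_range hP (hK.trans inf_le_right),
    by rw [Submodule.range_starProjection]⟩

section Matrix

variable {ι : Type*} [Fintype ι]

def projTraceValues (a r : Matrix ι ι ℂ) (j : ℕ) : Set ℝ :=
  {y | ∃ q : Matrix ι ι ℂ, q * q = q ∧ q.IsHermitian ∧ q * r = q ∧ q.rank = j ∧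
    y = (trace (a * q)).re}

def maxMinTraceValues (a : Matrix ι ι ℂ) (k j : ℕ) : Set ℝ :=
  {x | ∃ r : Matrix ι ι ℂ, r * r = r ∧ r.IsHermitian ∧ k ≤ r.rank ∧
    IsLeast (projTraceValues a r j) x}

section StarAlgEquiv

variable (φ : Matrix ι ι ℂ ≃⋆ₐ[ℂ] Matrix ι ι ℂ)

lemma isHermitian_starAlgEquiv_apply_iff {m : Matrix ι ι ℂ} :
    (φ m).IsHermitian ↔ m.IsHermitian := by
  simp only [IsHermitian, ← star_eq_conjTranspose, ← map_star, EmbeddingLike.apply_eq_iff_eq]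

variable (hrank : ∀ m, (φ m).rank = m.rank) (htrace : ∀ m, trace (φ m) = trace m)
include hrank htrace

lemma projTraceValues_map (a r : Matrix ι ι ℂ) (j : ℕ) :
    projTraceValues (φ a) (φ r) j = projTraceValues a r j := by
  ext y
  refine (EquivLike.surjective φ).exists.trans (exists_congr fun q => ?_)
  rw [← map_mul φ, EmbeddingLike.apply_eq_iff_eq, isHermitian_starAlgEquiv_apply_iff,
    ← map_mul φ, EmbeddingLike.apply_eq_iff_eq, hrank, ← map_mul φ, htrace]

lemma maxMinTraceValues_map (a : Matrix ι ι ℂ) (k j : ℕ) :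
    maxMinTraceValues (φ a) k j = maxMinTraceValues a k j := by
  ext x
  refine (EquivLike.surjective φ).exists.trans (exists_congr fun r => ?_)
  rw [← map_mul φ, EmbeddingLike.apply_eq_iff_eq, isHermitian_starAlgEquiv_apply_iff, hrank,
    projTraceValues_map φ hrank htrace]

end StarAlgEquiv

variable [DecidableEq ι]

lemma maxMinTraceValues_unitary_conj {u : Matrix ι ι ℂ} (hu : u ∈ unitaryGroup ι ℂ)
    (a : Matrix ι ι ℂ) (k j : ℕ) :
    maxMinTraceValues (u * a * star u) k j = maxMinTraceValues a k j := by
  let v : unitaryGroup ι ℂ := ⟨u, hu⟩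
  have hu_det : IsUnit u.det := UnitaryGroup.det_isUnit v
  have hu_star_det : IsUnit (star u).det := UnitaryGroup.det_isUnit (star v)
  refine maxMinTraceValues_map (Unitary.conjStarAlgAut ℂ _ v) (fun m => ?_) (fun m => ?_) a k j
  · change (u * m * star u).rank = m.rank
    rw [rank_mul_eq_left_of_isUnit_det _ _ hu_star_det,
      rank_mul_eq_right_of_isUnit_det _ _ hu_det]
  · change (u * m * star u).trace = m.trace
    rw [trace_mul_cycle, Unitary.star_mul_self_of_mem hu, one_mul]

lemma Matrix.trace_eq_rank_of_isIdempotentElem {K : Type*} [Field K] {q : Matrix ι ι K}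
    (hq : IsIdempotentElem q) : q.trace = q.rank := by
  have h : IsIdempotentElem (toLin' q) := hq.map toLinAlgEquiv'
  rw [← trace_toLin'_eq, (LinearMap.IsIdempotentElem.isProj_range _ h).trace]
  rfl

lemma Matrix.rank_eq_finrank_range_toEuclideanCLM (A : Matrix ι ι ℂ) :
    A.rank = finrank ℂ (toEuclideanCLM (n := ι) (𝕜 := ℂ) A).range := by
  rw [rank_eq_finrank_range_toLin A (EuclideanSpace.basisFun ι ℂ).toBasis
    (EuclideanSpace.basisFun ι ℂ).toBasis]
  rfl

lemma Matrix.exists_isStarProjection_mul_eq_of_le_rank_add_rank {r p : Matrix ι ι ℂ}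
    (hr : IsStarProjection r) (hp : IsStarProjection p) {j : ℕ}
    (hj : j + Fintype.card ι ≤ r.rank + p.rank) :
    ∃ q : Matrix ι ι ℂ, IsStarProjection q ∧ q * r = q ∧ q * p = q ∧ q.rank = j := by
  let φ : Matrix ι ι ℂ ≃⋆ₐ[ℂ] (EuclideanSpace ℂ ι →L[ℂ] EuclideanSpace ℂ ι) := toEuclideanCLM
  have hrank (m : Matrix ι ι ℂ) : m.rank = finrank ℂ (φ m).range :=
    rank_eq_finrank_range_toEuclideanCLM m
  rw [hrank, hrank, ← finrank_euclideanSpace (𝕜 := ℂ)] at hj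
  obtain ⟨Q, hQ, hQr, hQp, hQrank⟩ :=
    ContinuousLinearMap.exists_isStarProjection_mul_eq_of_le_finrank_add (hr.map φ) (hp.map φ) hj
  have hmul {s : Matrix ι ι ℂ} (h : Q * φ s = Q) : φ.symm Q * s = φ.symm Q :=
    EquivLike.injective φ <| by rw [map_mul φ, φ.apply_symm_apply, h]
  exact ⟨φ.symm Q, hQ.map φ.symm, hmul hQr, hmul hQp, by rw [hrank, φ.apply_symm_apply, hQrank]⟩

open scoped ComplexOrder MatrixOrder in
lemma IsStarProjection.re_diag_mem_Icc {q : Matrix ι ι ℂ} (hq : IsStarProjection q) (t : ι) :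
    (q t t).re ∈ Set.Icc 0 1 := by
  have h₀ : 0 ≤ q t t := hq.nonneg.posSemidef.diag_nonneg
  have h₁ : 0 ≤ (1 - q) t t := (sub_nonneg.mpr hq.le_one).posSemidef.diag_nonneg
  rw [Complex.nonneg_iff] at h₀
  rw [Matrix.sub_apply, one_apply_eq, Complex.nonneg_iff] at h₁
  exact ⟨h₀.1, by simpa using h₁.1⟩

lemma IsStarProjection.sum_re_diag {q : Matrix ι ι ℂ} (hq : IsStarProjection q) :
    ∑ t, (q t t).re = q.rank := by
  simpa [trace, Complex.re_sum] using
    congrArg Complex.re (trace_eq_rank_of_isIdempotentElem hq.isIdempotentElem)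

lemma Matrix.re_trace_diagonal_mul (lam : ι → ℝ) (q : Matrix ι ι ℂ) :
    (trace (diagonal (fun t => (lam t : ℂ)) * q)).re = ∑ t, lam t * (q t t).re := by
  simp [trace, diagonal_mul, Complex.re_sum]

def diagProj (s : Finset ι) : Matrix ι ι ℂ := diagonal fun t => if t ∈ s then 1 else 0

lemma diagProj_mul_diagProj_of_subset {s s' : Finset ι} (h : s ⊆ s') :
    diagProj s * diagProj s' = diagProj s := by
  rw [diagProj, diagProj, diagonal_mul_diagonal]
  congr 1
  ext t
  by_cases ht : t ∈ s
  · simp [ht, h ht]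
  · simp [ht]

lemma isStarProjection_diagProj (s : Finset ι) : IsStarProjection (diagProj s) where
  isIdempotentElem := diagProj_mul_diagProj_of_subset subset_rfl
  isSelfAdjoint := isHermitian_diagonal_iff.mpr fun t => by split_ifs <;> simp

lemma rank_diagProj (s : Finset ι) : (diagProj s).rank = #s := by
  rw [diagProj, rank_diagonal, Fintype.card_subtype]
  congr 1
  ext t
  simp

lemma re_trace_diagonal_mul_diagProj (lam : ι → ℝ) (s : Finset ι) :
    (trace (diagonal (fun t => (lam t : ℂ)) * diagProj s)).re = ∑ t ∈ s, lam t := by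
  simp [diagProj, trace, Complex.re_sum, sum_ite_mem]

lemma apply_self_eq_zero_of_mul_diagProj_eq {q : Matrix ι ι ℂ} {s : Finset ι}
    (h : q * diagProj s = q) {t : ι} (ht : t ∉ s) : q t t = 0 := by
  rw [← h, diagProj, mul_diagonal, if_neg ht, mul_zero]

lemma sum_le_re_trace_diagonal_mul {lam : ι → ℝ} {q : Matrix ι ι ℂ} (hq : IsStarProjection q)
    {s T : Finset ι} (hqs : q * diagProj s = q) (hrank : q.rank = #T) {c : ℝ}
    (hT : ∀ t ∈ T, lam t ≤ c) (hsT : ∀ t ∈ s, t ∉ T → c ≤ lam t) :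
    ∑ t ∈ T, lam t ≤ (trace (diagonal (fun t => (lam t : ℂ)) * q)).re := by
  rw [re_trace_diagonal_mul]
  refine sum_le_sum_mul_of_threshold T lam _ c (fun t => (hq.re_diag_mem_Icc t).1)
    (fun t => (hq.re_diag_mem_Icc t).2) (by rw [hq.sum_re_diag, hrank]) hT fun t htT hqt => ?_
  refine hsT t (by_contra fun hts => hqt ?_) htT
  rw [apply_self_eq_zero_of_mul_diagProj_eq hqs hts, Complex.zero_re]

lemma re_trace_diagonal_mul_le_sum {lam : ι → ℝ} {q : Matrix ι ι ℂ} (hq : IsStarProjection q)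
    {s T : Finset ι} (hqs : q * diagProj s = q) (hrank : q.rank = #T) {c : ℝ}
    (hT : ∀ t ∈ T, c ≤ lam t) (hsT : ∀ t ∈ s, t ∉ T → lam t ≤ c) :
    (trace (diagonal (fun t => (lam t : ℂ)) * q)).re ≤ ∑ t ∈ T, lam t := by
  have := sum_le_re_trace_diagonal_mul (lam := -lam) hq hqs hrank (c := -c)
    (fun t ht => neg_le_neg (hT t ht)) (fun t hs ht => neg_le_neg (hsT t hs ht))
  simp only [re_trace_diagonal_mul, Pi.neg_apply, neg_mul, sum_neg_distrib,
    neg_le_neg_iff] at this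
  rwa [re_trace_diagonal_mul]

end Matrix

def finIco (n a b : ℕ) : Finset (Fin n) := {t | a ≤ (t : ℕ) ∧ (t : ℕ) < b}

lemma mem_finIco {n a b : ℕ} {t : Fin n} : t ∈ finIco n a b ↔ a ≤ (t : ℕ) ∧ (t : ℕ) < b := by
  simp [finIco]

lemma card_finIco {n a b : ℕ} (hb : b ≤ n) : #(finIco n a b) = b - a := by
  rw [← Nat.card_Ico, ← card_map Fin.valEmbedding]
  congr 1
  ext m
  simp only [mem_map, mem_finIco, Fin.valEmbedding_apply, mem_Ico]
  constructor
  · rintro ⟨t, ht, rfl⟩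
    exact ht
  · intro hm
    exact ⟨⟨m, by omega⟩, hm, rfl⟩

section Diagonal

variable {n : ℕ} {lam : Fin n → ℝ} {a j : ℕ}

lemma sum_finIco_mem_maxMinTraceValues_diagonal (hlam : Monotone lam) (hj : 1 ≤ j)
    (haj : a + j ≤ n) :
    ∑ t ∈ finIco n a (a + j), lam t ∈
      maxMinTraceValues (diagonal fun t => (lam t : ℂ)) (n - a) j := by
  refine ⟨diagProj (finIco n a n), (isStarProjection_diagProj _).1,
    (isStarProjection_diagProj _).2, by rw [rank_diagProj, card_finIco le_rfl], ?_, ?_⟩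
  · refine ⟨diagProj (finIco n a (a + j)), (isStarProjection_diagProj _).1,
      (isStarProjection_diagProj _).2, diagProj_mul_diagProj_of_subset ?_, ?_, ?_⟩
    · intro t
      simp only [mem_finIco]
      omega
    · rw [rank_diagProj, card_finIco haj]
      omega
    · rw [re_trace_diagonal_mul_diagProj]
  · rintro y ⟨q, hq, hqh, hqr, hqrank, rfl⟩
    refine sum_le_re_trace_diagonal_mul ⟨hq, hqh⟩ hqr (by rw [hqrank, card_finIco haj]; omega)
      (c := lam ⟨a + j - 1, by omega⟩) (fun t ht => ?_) (fun t hs ht => ?_)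
    · rw [mem_finIco] at ht
      exact hlam (show (t : ℕ) ≤ a + j - 1 by omega)
    · rw [mem_finIco] at hs ht
      exact hlam (show a + j - 1 ≤ (t : ℕ) by omega)

lemma le_sum_finIco_of_mem_maxMinTraceValues_diagonal (hlam : Monotone lam) (hj : 1 ≤ j)
    (haj : a + j ≤ n) {x : ℝ}
    (hx : x ∈ maxMinTraceValues (diagonal fun t => (lam t : ℂ)) (n - a) j) :
    x ≤ ∑ t ∈ finIco n a (a + j), lam t := by
  obtain ⟨r, hr, hrh, hrank, hleast⟩ := hx
  obtain ⟨q, hq, hqr, hqp, hqrank⟩ := exists_isStarProjection_mul_eq_of_le_rank_add_rank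
    ⟨hr, hrh⟩ (isStarProjection_diagProj (finIco n 0 (a + j))) (j := j)
    (by rw [rank_diagProj, card_finIco haj, Fintype.card_fin]; omega)
  refine (hleast.2 ⟨q, hq.1, hq.2, hqr, hqrank, rfl⟩).trans ?_
  refine re_trace_diagonal_mul_le_sum hq hqp (by rw [hqrank, card_finIco haj]; omega)
    (c := lam ⟨a, by omega⟩) (fun t ht => ?_) (fun t hs ht => ?_)
  · rw [mem_finIco] at ht
    exact hlam (show a ≤ (t : ℕ) by omega)
  · rw [mem_finIco] at hs ht
    exact hlam (show (t : ℕ) ≤ a by omega)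

end Diagonal

theorem stmt_9_general {n : ℕ} (a : Matrix (Fin n) (Fin n) ℂ)
    (lam : Fin n → ℝ) (hlam : StrictMono lam)
    (U : Matrix (Fin n) (Fin n) ℂ) (hU : U ∈ Matrix.unitaryGroup (Fin n) ℂ)
    (hdiag : a = U * Matrix.diagonal (fun i => (lam i : ℂ)) * star U)
    (i j : ℕ) (hi : 1 ≤ i) (hj : 1 ≤ j) (hij : i + j - 1 ≤ n) :
    IsGreatest {x : ℝ | ∃ r : Matrix (Fin n) (Fin n) ℂ, r * r = r ∧ r.IsHermitian ∧
        n - i + 1 ≤ r.rank ∧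
        IsLeast {y : ℝ | ∃ q : Matrix (Fin n) (Fin n) ℂ, q * q = q ∧ q.IsHermitian ∧
          q * r = q ∧ q.rank = j ∧ y = (Matrix.trace (a * q)).re} x}
      (∑ t ∈ Finset.univ.filter
          (fun t : Fin n => i ≤ (t : ℕ) + 1 ∧ (t : ℕ) + 1 ≤ i + j - 1), lam t) := by
  obtain ⟨i₀, rfl⟩ : ∃ i₀, i = i₀ + 1 := ⟨i - 1, by omega⟩
  have hrank : n - (i₀ + 1) + 1 = n - i₀ := by omega
  have hwindow : univ.filter
      (fun t : Fin n => i₀ + 1 ≤ (t : ℕ) + 1 ∧ (t : ℕ) + 1 ≤ i₀ + 1 + j - 1)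
      = finIco n i₀ (i₀ + j) := by
    ext t
    simp only [mem_filter, mem_univ, true_and, mem_finIco]
    omega
  subst hdiag
  change IsGreatest (maxMinTraceValues _ _ j) _
  rw [hrank, hwindow, maxMinTraceValues_unitary_conj hU]
  have haj : i₀ + j ≤ n := by omega
  exact ⟨sum_finIco_mem_maxMinTraceValues_diagonal hlam.monotone hj haj,
    fun _ => le_sum_finIco_of_mem_maxMinTraceValues_diagonal hlam.monotone hj haj⟩

theorem stmt_9 {n : ℕ} (a : Matrix (Fin n) (Fin n) ℂ) (ha : a.IsHermitian)
    (lam : Fin n → ℝ) (hlam : StrictMono lam)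
    (U : Matrix (Fin n) (Fin n) ℂ) (hU : U ∈ Matrix.unitaryGroup (Fin n) ℂ)
    (hdiag : a = U * Matrix.diagonal (fun i => (lam i : ℂ)) * star U)
    (i j : ℕ) (hi : 1 ≤ i) (hj : 1 ≤ j) (hij : i + j - 1 ≤ n) :
    IsGreatest {x : ℝ | ∃ r : Matrix (Fin n) (Fin n) ℂ, r * r = r ∧ r.IsHermitian ∧
        n - i + 1 ≤ r.rank ∧
        IsLeast {y : ℝ | ∃ q : Matrix (Fin n) (Fin n) ℂ, q * q = q ∧ q.IsHermitian ∧
          q * r = q ∧ q.rank = j ∧ y = (Matrix.trace (a * q)).re} x}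
      (∑ t ∈ Finset.univ.filter
          (fun t : Fin n => i ≤ (t : ℕ) + 1 ∧ (t : ℕ) + 1 ≤ i + j - 1), lam t) :=
  stmt_9_general a lam hlam U hU hdiag i j hi hj hij
end

section
/- Let a, b be Hermitian matrices in M_n(ℂ) with eigenvalues λ₁(a) ≤ ⋯ ≤ λ_n(a), λ₁(b) ≤ ⋯ ≤ λ_n(b), λ₁(a+b) ≤ ⋯ ≤ λ_n(a+b). Then for all k ∈ {1, …, n−1}, Σ_{j=1}^k λ_j(a+b) ≥ Σ_{j=1}^k λ_j(a) + Σ_{j=1}^k λ_j(b), and Σ_{j=1}^n λ_j(a+b) = Σ_{j=1}^n λ_j(a) + Σ_{j=1}^n λ_j(b). -/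
/-!
Conjugate everything by the unitary `Uab` diagonalising `a + b`. The first `k` diagonal entries of
the conjugated `a + b` sum to `λ₁(a+b) + ⋯ + λₖ(a+b)`, and this partial trace splits into those of
the conjugated `a` and `b`. For `W * diag(l) * Wᴴ` with `W` unitary, the partial trace over `k`
rows is `∑ⱼ cⱼ lⱼ` with weights `0 ≤ cⱼ ≤ 1` summing to `k` (row and column norms of `W`), and such
a weighted sum of the increasing sequence `l` is at least `l₁ + ⋯ + lₖ` (Ky Fan's minimum
principle). The equality for `k = n` is the additivity of the trace.
-/

open Matrix

section

variable {ι : Type*} [Fintype ι] [DecidableEq ι]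

theorem sum_le_sum_mul_of_separated (s : Finset ι) {l c : ι → ℝ} {t : ℝ}
    (hs : ∀ i ∈ s, l i ≤ t) (hsc : ∀ i ∉ s, t ≤ l i)
    (hc0 : ∀ j, 0 ≤ c j) (hc1 : ∀ j, c j ≤ 1) (hc : ∑ j, c j = s.card) :
    ∑ i ∈ s, l i ≤ ∑ j, c j * l j := by
  -- each term of `∑ⱼ (cⱼ - 1_s(j)) (lⱼ - t)` is nonnegative, and the sum is `∑ c l - ∑ₛ l`
  set d : ι → ℝ := fun j => if j ∈ s then 1 else 0
  have hterm : ∀ j, 0 ≤ (c j - d j) * (l j - t) := by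
    intro j
    by_cases hj : j ∈ s
    · simp only [d, if_pos hj]
      exact mul_nonneg_of_nonpos_of_nonpos (by linarith [hc1 j]) (by linarith [hs j hj])
    · simp only [d, if_neg hj]
      exact mul_nonneg (by linarith [hc0 j]) (by linarith [hsc j hj])
  have hd : ∑ j, d j = s.card := by simp [d]
  have hdl : ∑ j, d j * l j = ∑ i ∈ s, l i := by simp [d, Finset.sum_ite_mem]
  have hexpand : ∑ j, (c j - d j) * (l j - t)
      = ∑ j, c j * l j - ∑ j, d j * l j - t * (∑ j, c j - ∑ j, d j) := by
    simp only [← Finset.sum_sub_distrib, Finset.mul_sum]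
    exact Finset.sum_congr rfl fun j _ => by ring
  have := Finset.sum_nonneg fun j (_ : j ∈ Finset.univ) => hterm j
  rw [hexpand, hc, hd, hdl, sub_self, mul_zero, sub_zero] at this
  linarith

theorem mul_diagonal_mul_star_apply_self (W : Matrix ι ι ℂ) (l : ι → ℝ) (i : ι) :
    (W * diagonal (fun j => (l j : ℂ)) * star W) i i =
      ((∑ j, Complex.normSq (W i j) * l j : ℝ) : ℂ) := by
  rw [mul_apply]
  simp only [mul_diagonal, star_apply, RCLike.star_def]
  push_cast
  exact Finset.sum_congr rfl fun j _ => by rw [← Complex.mul_conj]; ring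

variable {W : Matrix ι ι ℂ}

theorem sum_normSq_row_of_mem_unitaryGroup (hW : W ∈ unitaryGroup ι ℂ) (i : ι) :
    ∑ j, Complex.normSq (W i j) = 1 := by
  have h : (W * star W) i i = 1 := by rw [Unitary.mul_star_self_of_mem hW, one_apply_eq]
  simp only [mul_apply, star_apply, RCLike.star_def, Complex.mul_conj] at h
  exact_mod_cast h

theorem sum_normSq_col_of_mem_unitaryGroup (hW : W ∈ unitaryGroup ι ℂ) (j : ι) :
    ∑ i, Complex.normSq (W i j) = 1 := by
  have h : (star W * W) j j = 1 := by rw [Unitary.star_mul_self_of_mem hW, one_apply_eq]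
  simp only [mul_apply, star_apply, RCLike.star_def, mul_comm (starRingEnd ℂ _),
    Complex.mul_conj] at h
  exact_mod_cast h

theorem sum_le_re_sum_diag_of_separated (hW : W ∈ unitaryGroup ι ℂ) (s : Finset ι)
    {l : ι → ℝ} {t : ℝ} (hs : ∀ i ∈ s, l i ≤ t) (hsc : ∀ i ∉ s, t ≤ l i) :
    ∑ i ∈ s, l i ≤ (∑ i ∈ s, (W * diagonal (fun j => (l j : ℂ)) * star W) i i).re := by
  simp only [mul_diagonal_mul_star_apply_self, ← Complex.ofReal_sum, Complex.ofReal_re]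
  rw [Finset.sum_comm]
  simp only [← Finset.sum_mul]
  refine sum_le_sum_mul_of_separated s hs hsc (fun j => Finset.sum_nonneg fun i _ =>
    Complex.normSq_nonneg _) (fun j => ?_) ?_
  · calc ∑ i ∈ s, Complex.normSq (W i j) ≤ ∑ i, Complex.normSq (W i j) :=
          Finset.sum_le_sum_of_subset_of_nonneg (Finset.subset_univ s)
            fun i _ _ => Complex.normSq_nonneg _
      _ = 1 := sum_normSq_col_of_mem_unitaryGroup hW j
  · rw [Finset.sum_comm]
    simp [sum_normSq_row_of_mem_unitaryGroup hW]

end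

theorem sum_lt_le_re_sum_diag_of_monotone {n k : ℕ} (hk : 1 ≤ k) (hkn : k ≤ n)
    {W : Matrix (Fin n) (Fin n) ℂ} (hW : W ∈ unitaryGroup (Fin n) ℂ)
    {l : Fin n → ℝ} (hl : Monotone l) :
    ∑ i ∈ Finset.univ.filter (fun i : Fin n => (i : ℕ) < k), l i ≤
      (∑ i ∈ Finset.univ.filter (fun i : Fin n => (i : ℕ) < k),
        (W * diagonal (fun j => (l j : ℂ)) * star W) i i).re :=
  sum_le_re_sum_diag_of_separated hW _ (t := l ⟨k - 1, by omega⟩)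
    (fun i hi => hl (Fin.mk_le_mk.mpr (by simp at hi; omega)))
    (fun i hi => hl (Fin.mk_le_mk.mpr (by simp at hi; omega)))

theorem trace_mul_diagonal_mul_star {ι R : Type*} [Fintype ι] [DecidableEq ι] [CommRing R]
    [StarRing R] {U : Matrix ι ι R} (hU : U ∈ unitaryGroup ι R) (d : ι → R) :
    trace (U * diagonal d * star U) = ∑ i, d i := by
  rw [trace_mul_cycle, Unitary.star_mul_self_of_mem hU, one_mul, trace_diagonal]

theorem stmt_11_general {n : ℕ} (a b : Matrix (Fin n) (Fin n) ℂ)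
    (la lb lab : Fin n → ℝ) (hla : Monotone la) (hlb : Monotone lb)
    (Ua : Matrix (Fin n) (Fin n) ℂ) (hUa : Ua ∈ Matrix.unitaryGroup (Fin n) ℂ)
    (hdiaga : a = Ua * Matrix.diagonal (fun i => (la i : ℂ)) * star Ua)
    (Ub : Matrix (Fin n) (Fin n) ℂ) (hUb : Ub ∈ Matrix.unitaryGroup (Fin n) ℂ)
    (hdiagb : b = Ub * Matrix.diagonal (fun i => (lb i : ℂ)) * star Ub)
    (Uab : Matrix (Fin n) (Fin n) ℂ) (hUab : Uab ∈ Matrix.unitaryGroup (Fin n) ℂ)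
    (hdiagab : a + b = Uab * Matrix.diagonal (fun i => (lab i : ℂ)) * star Uab) :
    (∀ k : ℕ, 1 ≤ k → k ≤ n - 1 →
      ∑ i ∈ Finset.univ.filter (fun i : Fin n => (i : ℕ) < k), la i +
        ∑ i ∈ Finset.univ.filter (fun i : Fin n => (i : ℕ) < k), lb i ≤
      ∑ i ∈ Finset.univ.filter (fun i : Fin n => (i : ℕ) < k), lab i) ∧
    ∑ i, lab i = ∑ i, la i + ∑ i, lb i := by
  refine ⟨fun k hk hkn => ?_, ?_⟩
  · set s := Finset.univ.filter (fun i : Fin n => (i : ℕ) < k)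
    have hconj : ∀ (U M : Matrix (Fin n) (Fin n) ℂ),
        star Uab * (U * M * star U) * Uab = (star Uab * U) * M * star (star Uab * U) := by
      intro U M
      simp only [star_mul, star_star, Matrix.mul_assoc]
    have hV : star Uab ∈ unitaryGroup (Fin n) ℂ := Unitary.star_mem hUab
    calc ∑ i ∈ s, la i + ∑ i ∈ s, lb i
        ≤ (∑ i ∈ s, (star Uab * a * Uab) i i).re + (∑ i ∈ s, (star Uab * b * Uab) i i).re := by
          rw [hdiaga, hdiagb, hconj, hconj]
          exact add_le_add (sum_lt_le_re_sum_diag_of_monotone hk (by omega) (mul_mem hV hUa) hla)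
            (sum_lt_le_re_sum_diag_of_monotone hk (by omega) (mul_mem hV hUb) hlb)
      _ = (∑ i ∈ s, (star Uab * (a + b) * Uab) i i).re := by
          simp only [Matrix.mul_add, Matrix.add_mul, Matrix.add_apply, Finset.sum_add_distrib,
            Complex.add_re]
      _ = ∑ i ∈ s, lab i := by
          rw [hdiagab, hconj, Unitary.star_mul_self_of_mem hUab, star_one, Matrix.one_mul,
            Matrix.mul_one]
          simp [diagonal_apply_eq]
  · have htrace := congrArg trace hdiagab
    rw [trace_add, hdiaga, hdiagb, trace_mul_diagonal_mul_star hUa,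
      trace_mul_diagonal_mul_star hUb, trace_mul_diagonal_mul_star hUab] at htrace
    exact_mod_cast htrace.symm

theorem stmt_11 {n : ℕ} (a b : Matrix (Fin n) (Fin n) ℂ)
    (ha : a.IsHermitian) (hb : b.IsHermitian)
    (la lb lab : Fin n → ℝ) (hla : Monotone la) (hlb : Monotone lb) (hlab : Monotone lab)
    (Ua : Matrix (Fin n) (Fin n) ℂ) (hUa : Ua ∈ Matrix.unitaryGroup (Fin n) ℂ)
    (hdiaga : a = Ua * Matrix.diagonal (fun i => (la i : ℂ)) * star Ua)
    (Ub : Matrix (Fin n) (Fin n) ℂ) (hUb : Ub ∈ Matrix.unitaryGroup (Fin n) ℂ)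
    (hdiagb : b = Ub * Matrix.diagonal (fun i => (lb i : ℂ)) * star Ub)
    (Uab : Matrix (Fin n) (Fin n) ℂ) (hUab : Uab ∈ Matrix.unitaryGroup (Fin n) ℂ)
    (hdiagab : a + b = Uab * Matrix.diagonal (fun i => (lab i : ℂ)) * star Uab) :
    (∀ k : ℕ, 1 ≤ k → k ≤ n - 1 →
      ∑ i ∈ Finset.univ.filter (fun i : Fin n => (i : ℕ) < k), la i +
        ∑ i ∈ Finset.univ.filter (fun i : Fin n => (i : ℕ) < k), lb i ≤
      ∑ i ∈ Finset.univ.filter (fun i : Fin n => (i : ℕ) < k), lab i) ∧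
    ∑ i, lab i = ∑ i, la i + ∑ i, lb i :=
  stmt_11_general a b la lb lab hla hlb Ua hUa hdiaga Ub hUb hdiagb Uab hUab hdiagab
end

section
/- Let M be a von Neumann algebra with faithful normal tracial state τ and let a, b ∈ M be self-adjoint with non-atomic distributions μ_a, μ_b, μ_{a+b}. Then for all s ∈ [0,1), ∫_0^s X_{a+b} dm ≥ ∫_0^s X_a dm + ∫_0^s X_b dm, and ∫_0^1 X_{a+b} dm = ∫_0^1 X_a dm + ∫_0^1 X_b dm = τ(a) + τ(b). In other words, X_a + X_b is majorized by X_{a+b}. -/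
open MeasureTheory

/-- The (left-continuous) distribution function of a measure on `ℝ`. -/
noncomputable def distFun (μ : Measure ℝ) (t : ℝ) : ℝ := (μ (Set.Iio t)).toReal

/-- The quantile function of a measure on `ℝ`. -/
noncomputable def quantileFun (μ : Measure ℝ) (s : ℝ) : ℝ := sInf {t : ℝ | s < distFun μ t}

/-!
Since `X_ν` pushes Lebesgue measure on `[0,1)` forward to `ν`, `∫₀ˢ X_ν` is the maximum over `t`
of `s t - ∫ (t - x)⁺ dν(x)`, attained at `t = X_ν(s)`. The inequality therefore reduces to
`τ((t_a + t_b - (a + b))⁺) ≤ τ((t_a - a)⁺) + τ((t_b - b)⁺)`, where the moment hypotheses turn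
`τ(f(c))` into `∫ f dμ_c` for continuous `f` (Weierstrass approximation). The trace property
gives `τ(p q) ≥ 0` for `p, q ≥ 0`, hence `τ(x G) ≤ τ(x⁺)` for self-adjoint `x` and `0 ≤ G ≤ 1`;
taking for `G` a continuous approximation of the spectral projection of `x + y` onto `[0, ∞)`
yields `τ((x + y)⁺) ≤ τ(x⁺) + τ(y⁺)`.
-/

open Set Filter Topology Polynomial

theorem MeasureTheory.Measure.ext_of_Iio {α : Type*} [TopologicalSpace α] {_ : MeasurableSpace α}
    [SecondCountableTopology α] [ConditionallyCompleteLinearOrder α] [OrderTopology α]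
    [BorelSpace α] [NoMaxOrder α] (μ ν : Measure α) [IsFiniteMeasure μ]
    (h : ∀ a, μ (Iio a) = ν (Iio a)) : μ = ν := by
  refine μ.ext_of_Ico ν fun a b hab => ?_
  have hdiff : Iio b \ Iio a = Ico a b := by ext; simp
  rw [← hdiff, measure_sdiff (Iio_subset_Iio hab.le) measurableSet_Iio.nullMeasurableSet
    (measure_ne_top μ _), measure_sdiff (Iio_subset_Iio hab.le) measurableSet_Iio.nullMeasurableSet
    (h a ▸ measure_ne_top μ _), h, h]

theorem Continuous.integrable_of_ae_mem_Icc {ν : Measure ℝ} [IsFiniteMeasure ν] {a b : ℝ}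
    {f : ℝ → ℝ} (hf : Continuous f) (hν : ∀ᵐ x ∂ν, x ∈ Icc a b) : Integrable f ν := by
  rw [← Measure.restrict_eq_self_of_ae_mem hν]
  exact hf.continuousOn.integrableOn_Icc

theorem ae_mem_Icc_of_measure_lt_abs_eq_zero {ν : Measure ℝ} {R : ℝ}
    (h : ν {t | R < |t|} = 0) : ∀ᵐ t ∂ν, t ∈ Icc (-R) R :=
  (measure_eq_zero_iff_ae_notMem.1 h).mono fun _ ht => abs_le.1 (not_lt.1 ht)

section Quantile

variable {ν : Measure ℝ} {R s t : ℝ}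

variable (ν) in
lemma distFun_mono [IsFiniteMeasure ν] : Monotone (distFun ν) := fun _ _ h =>
  ENNReal.toReal_mono (measure_ne_top ν _) (measure_mono (Iio_subset_Iio h))

lemma distFun_le_one [IsProbabilityMeasure ν] (t : ℝ) : distFun ν t ≤ 1 :=
  measureReal_le_one

lemma exists_lt_distFun_of_lt [IsFiniteMeasure ν] (h : s < distFun ν t) :
    ∃ t' < t, s < distFun ν t' := by
  obtain ⟨u, hu_mono, hu_lt, hu_lim⟩ := exists_seq_strictMono_tendsto t
  have hIio : ⋃ n, Iio (u n) = Iio t :=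
    (isLUB_of_tendsto_atTop hu_mono.monotone hu_lim).iUnion_Iio_eq
  have hlim : Tendsto (fun n => distFun ν (u n)) atTop (𝓝 (distFun ν t)) := by
    refine (ENNReal.tendsto_toReal (measure_ne_top ν _)).comp ?_
    rw [← hIio]
    exact tendsto_measure_iUnion_atTop fun m n hmn => Iio_subset_Iio (hu_mono.monotone hmn)
  obtain ⟨n, hn⟩ := (hlim.eventually (lt_mem_nhds h)).exists
  exact ⟨u n, hu_lt n, hn⟩

variable (hR : ∀ᵐ x ∂ν, x ∈ Icc (-R) R)
include hR

lemma distFun_eq_one_of_lt [IsProbabilityMeasure ν] (ht : R < t) : distFun ν t = 1 := by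
  have : ν (Iio t)ᶜ = 0 :=
    measure_mono_null (fun x (hx : x ∈ (Iio t)ᶜ) (hxR : x ∈ Icc (-R) R) =>
      hx (hxR.2.trans_lt ht)) (ae_iff.1 hR)
  simp [distFun, (prob_compl_eq_zero_iff measurableSet_Iio).1 this]

lemma distFun_eq_zero_of_le (ht : t ≤ -R) : distFun ν t = 0 := by
  have : ν (Iio t) = 0 :=
    measure_mono_null (fun x (hx : x < t) (hxR : x ∈ Icc (-R) R) =>
      not_lt.2 hxR.1 (hx.trans_le ht)) (ae_iff.1 hR)
  simp [distFun, this]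

lemma neg_le_of_lt_distFun (hs : 0 ≤ s) (h : s < distFun ν t) : -R ≤ t := by
  refine le_of_not_gt fun htR => ?_
  rw [distFun_eq_zero_of_le hR htR.le] at h
  linarith

lemma nonempty_setOf_lt_distFun [IsProbabilityMeasure ν] (hs : s < 1) :
    {t | s < distFun ν t}.Nonempty :=
  ⟨R + 1, by simpa [distFun_eq_one_of_lt hR (lt_add_one R)]⟩

lemma quantileFun_lt_iff [IsProbabilityMeasure ν] (hs : s ∈ Ico 0 1) :
    quantileFun ν s < t ↔ s < distFun ν t := by
  have hbdd : BddBelow {t | s < distFun ν t} := ⟨-R, fun _ => neg_le_of_lt_distFun hR hs.1⟩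
  constructor
  · intro h
    obtain ⟨t', ht', ht't⟩ := (csInf_lt_iff hbdd (nonempty_setOf_lt_distFun hR hs.2)).1 h
    exact ht'.trans_le (distFun_mono ν ht't.le)
  · intro h
    obtain ⟨t', ht't, ht'⟩ := exists_lt_distFun_of_lt h
    exact (csInf_le hbdd ht').trans_lt ht't

lemma monotoneOn_quantileFun [IsProbabilityMeasure ν] : MonotoneOn (quantileFun ν) (Ico 0 1) :=
  fun _ hs _ hs' hss' => le_of_forall_gt fun _ ht =>
    (quantileFun_lt_iff hR hs).2 (hss'.trans_lt ((quantileFun_lt_iff hR hs').1 ht))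

lemma aemeasurable_quantileFun [IsProbabilityMeasure ν] :
    AEMeasurable (quantileFun ν) (volume.restrict (Ico 0 1)) :=
  aemeasurable_restrict_of_monotoneOn measurableSet_Ico (monotoneOn_quantileFun hR)

theorem map_quantileFun [IsProbabilityMeasure ν] :
    (volume.restrict (Ico 0 1)).map (quantileFun ν) = ν := by
  have : IsFiniteMeasure (volume.restrict (Ico (0 : ℝ) 1)) := ⟨by simp⟩
  refine Measure.ext_of_Iio _ _ fun t => ?_
  have hpre : quantileFun ν ⁻¹' Iio t ∩ Ico 0 1 = Ico 0 (distFun ν t) := by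
    ext u
    simp only [mem_inter_iff, mem_preimage, mem_Iio, mem_Ico]
    constructor
    · rintro ⟨hu, hu0, hu1⟩
      exact ⟨hu0, (quantileFun_lt_iff hR ⟨hu0, hu1⟩).1 hu⟩
    · rintro ⟨hu0, hut⟩
      have hu1 : u < 1 := hut.trans_le (distFun_le_one t)
      exact ⟨(quantileFun_lt_iff hR ⟨hu0, hu1⟩).2 hut, hu0, hu1⟩
  rw [Measure.map_apply_of_aemeasurable (aemeasurable_quantileFun hR) measurableSet_Iio,
    Measure.restrict_apply' measurableSet_Ico, hpre, Real.volume_Ico, sub_zero, distFun,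
    ENNReal.ofReal_toReal (measure_ne_top ν _)]

theorem integral_comp_quantileFun [IsProbabilityMeasure ν] {f : ℝ → ℝ} (hf : Continuous f) :
    ∫ u in Ico 0 1, f (quantileFun ν u) = ∫ t, f t ∂ν := by
  conv_rhs => rw [← map_quantileFun hR]
  exact (integral_map (aemeasurable_quantileFun hR) hf.aestronglyMeasurable).symm

theorem integrableOn_comp_quantileFun [IsProbabilityMeasure ν] {f : ℝ → ℝ} (hf : Continuous f) :
    IntegrableOn (fun u => f (quantileFun ν u)) (Ico 0 1) :=
  (integrable_map_measure hf.aestronglyMeasurable (aemeasurable_quantileFun hR)).1 <| by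
    rw [map_quantileFun hR]
    exact hf.integrable_of_ae_mem_Icc hR

theorem setIntegral_quantileFun_eq_integral [IsProbabilityMeasure ν] :
    ∫ u in Ico 0 1, quantileFun ν u = ∫ t, t ∂ν :=
  integral_comp_quantileFun hR continuous_id

theorem isGreatest_setIntegral_quantileFun [IsProbabilityMeasure ν] (hs : s ∈ Ico 0 1) :
    IsGreatest (range fun t => s * t - ∫ x, (t - x)⁺ ∂ν) (∫ u in Ico 0 s, quantileFun ν u) := by
  have hsub : Ico 0 s ⊆ Ico (0 : ℝ) 1 := Ico_subset_Ico_right hs.2.le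
  have hQ : IntegrableOn (quantileFun ν) (Ico 0 s) :=
    (integrableOn_comp_quantileFun hR continuous_id).mono_set hsub
  have hconst (t : ℝ) : IntegrableOn (fun _ => t) (Ico 0 s) := integrableOn_const (by simp)
  have hlin (t : ℝ) :
      ∫ u in Ico 0 s, (t - quantileFun ν u) = s * t - ∫ u in Ico 0 s, quantileFun ν u := by
    rw [integral_sub (hconst t) hQ, setIntegral_const,
      Real.volume_real_Ico_of_le hs.1, sub_zero, smul_eq_mul]
  have hpos (t : ℝ) : ∫ x, (t - x)⁺ ∂ν = ∫ u in Ico 0 1, (t - quantileFun ν u)⁺ :=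
    (integral_comp_quantileFun hR (by fun_prop)).symm
  refine ⟨⟨quantileFun ν s, ?_⟩, ?_⟩
  · dsimp only
    rw [hpos, setIntegral_eq_of_subset_of_forall_sdiff_eq_zero measurableSet_Ico hsub,
      setIntegral_congr_fun measurableSet_Ico fun u hu => posPart_eq_self.2 ?_, hlin]
    · ring
    · exact sub_nonneg.2 <| monotoneOn_quantileFun hR ⟨hu.1, hu.2.trans hs.2⟩ hs hu.2.le
    · rintro u ⟨hu, hus⟩
      refine posPart_eq_zero.2 (sub_nonpos.2 <| monotoneOn_quantileFun hR hs hu ?_)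
      simpa [hu.1] using hus
  · rintro _ ⟨t, rfl⟩
    have hpos_int : IntegrableOn (fun u => (t - quantileFun ν u)⁺) (Ico 0 1) :=
      integrableOn_comp_quantileFun hR (f := fun x => (t - x)⁺) (by fun_prop)
    calc s * t - ∫ x, (t - x)⁺ ∂ν
        ≤ s * t - ∫ u in Ico 0 s, (t - quantileFun ν u)⁺ := by
          rw [hpos]
          exact sub_le_sub_left (setIntegral_mono_set hpos_int
            (.of_forall fun _ => posPart_nonneg _) hsub.eventuallyLE) _
      _ ≤ s * t - ∫ u in Ico 0 s, (t - quantileFun ν u) :=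
          sub_le_sub_left (setIntegral_mono_on ((hconst t).sub hQ)
            (hpos_int.mono_set hsub) measurableSet_Ico fun _ _ => le_posPart _) _
      _ = ∫ u in Ico 0 s, quantileFun ν u := by rw [hlin]; ring

end Quantile

theorem setIntegral_quantileFun_add_le {μa μb μab : Measure ℝ} [IsProbabilityMeasure μa]
    [IsProbabilityMeasure μb] [IsProbabilityMeasure μab] {Ra Rb Rab s : ℝ}
    (hRa : ∀ᵐ t ∂μa, t ∈ Icc (-Ra) Ra) (hRb : ∀ᵐ t ∂μb, t ∈ Icc (-Rb) Rb)
    (hRab : ∀ᵐ t ∂μab, t ∈ Icc (-Rab) Rab)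
    (h : ∀ ta tb : ℝ, ∫ x, (ta + tb - x)⁺ ∂μab ≤ ∫ x, (ta - x)⁺ ∂μa + ∫ x, (tb - x)⁺ ∂μb)
    (hs : s ∈ Ico 0 1) :
    (∫ u in Ico 0 s, quantileFun μa u) + ∫ u in Ico 0 s, quantileFun μb u ≤
      ∫ u in Ico 0 s, quantileFun μab u := by
  obtain ⟨ta, hta⟩ := (isGreatest_setIntegral_quantileFun hRa hs).1
  obtain ⟨tb, htb⟩ := (isGreatest_setIntegral_quantileFun hRb hs).1
  rw [← hta, ← htb]
  refine le_trans ?_ ((isGreatest_setIntegral_quantileFun hRab hs).2 ⟨ta + tb, rfl⟩)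
  linarith [h ta tb]

theorem posPart_le_mul_min_add {ε : ℝ} (hε : 0 < ε) (t : ℝ) :
    t⁺ ≤ t * min (t⁺ / ε) 1 + ε := by
  rcases le_total t 0 with ht | ht
  · simp [posPart_eq_zero.2 ht, hε.le]
  rw [posPart_eq_self.2 ht]
  rcases le_total t ε with htε | htε
  · have : 0 ≤ t * min (t / ε) 1 := by positivity
    linarith
  · rw [min_eq_right ((one_le_div hε).2 htε)]
    linarith

theorem CFC.posPart_eq_cfc {A : Type*} [CStarAlgebra A] (x : A) : x⁺ = cfc (·⁺ : ℝ → ℝ) x := by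
  rw [CFC.posPart_def, cfcₙ_eq_cfc]

theorem cfc_posPart_const_sub {A : Type*} [CStarAlgebra A] {x : A}
    (hx : IsSelfAdjoint x) (t : ℝ) :
    cfc (fun u : ℝ => (t - u)⁺) x = (algebraMap ℝ A t - x)⁺ := by
  rw [CFC.posPart_eq_cfc, cfc_comp' (·⁺) (fun u => t - u) x, cfc_sub _ _ x, cfc_const t x,
    cfc_id' ℝ x]

section Trace

variable {A : Type*} [CStarAlgebra A] [PartialOrder A] [StarOrderedRing A] (τ : A →ₗ[ℂ] ℂ)
  (hτtrace : ∀ x y : A, τ (x * y) = τ (y * x)) (hτpos : ∀ x : A, 0 ≤ (τ (star x * x)).re)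
include hτtrace hτpos

theorem re_trace_mul_nonneg {p q : A} (hp : 0 ≤ p) (hq : 0 ≤ q) : 0 ≤ (τ (p * q)).re := by
  obtain ⟨r, rfl, hr⟩ : ∃ r : A, r * r = p ∧ star r = r :=
    ⟨CFC.sqrt p, CFC.sqrt_mul_sqrt_self p, (CFC.sqrt_nonneg p).isSelfAdjoint.star_eq⟩
  obtain ⟨d, rfl, hd⟩ : ∃ d : A, d * d = q ∧ star d = d :=
    ⟨CFC.sqrt q, CFC.sqrt_mul_sqrt_self q, (CFC.sqrt_nonneg q).isSelfAdjoint.star_eq⟩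
  have : τ (r * r * (d * d)) = τ (star (d * r) * (d * r)) := by
    rw [mul_assoc, hτtrace, star_mul, hr, hd]
    simp only [mul_assoc]
  exact this ▸ hτpos _

theorem re_trace_mono {p q : A} (h : p ≤ q) : (τ p).re ≤ (τ q).re := by
  have := re_trace_mul_nonneg τ hτtrace hτpos (sub_nonneg.2 h) zero_le_one
  rwa [mul_one, map_sub, Complex.sub_re, sub_nonneg] at this

theorem re_trace_mul_le_posPart {x q : A} (hx : IsSelfAdjoint x) (hq₀ : 0 ≤ q) (hq₁ : q ≤ 1) :
    (τ (x * q)).re ≤ (τ x⁺).re :=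
  calc (τ (x * q)).re = (τ (x⁺ * q)).re - (τ (x⁻ * q)).re := by
        nth_rw 1 [← CFC.posPart_sub_negPart x]; rw [sub_mul, map_sub, Complex.sub_re]
    _ ≤ (τ (x⁺ * q)).re :=
        sub_le_self _ (re_trace_mul_nonneg τ hτtrace hτpos (CFC.negPart_nonneg x) hq₀)
    _ = (τ x⁺).re - (τ (x⁺ * (1 - q))).re := by
        rw [mul_sub, mul_one, map_sub, Complex.sub_re, sub_sub_cancel]
    _ ≤ (τ x⁺).re :=
        sub_le_self _
          (re_trace_mul_nonneg τ hτtrace hτpos (CFC.posPart_nonneg x) (sub_nonneg.2 hq₁))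

theorem re_trace_posPart_add_le {x y : A} (hx : IsSelfAdjoint x) (hy : IsSelfAdjoint y) :
    (τ (x + y)⁺).re ≤ (τ x⁺).re + (τ y⁺).re := by
  have hτ1 : 0 ≤ (τ 1).re := by
    simpa using re_trace_mono τ hτtrace hτpos (zero_le_one (α := A))
  have key (ε : ℝ) (hε : 0 < ε) :
      (τ (x + y)⁺).re ≤ (τ x⁺).re + (τ y⁺).re + ε * (τ 1).re := by
    let G := cfc (fun t : ℝ => min (t⁺ / ε) 1) (x + y)
    have hG₀ : 0 ≤ G := cfc_nonneg fun t _ => le_min (by positivity) zero_le_one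
    have hG₁ : G ≤ 1 := cfc_le_one _ _ fun t _ => min_le_right _ _
    have hle : (x + y)⁺ ≤ (x + y) * G + algebraMap ℝ A ε := by
      rw [CFC.posPart_eq_cfc]
      nth_rw 2 [← cfc_id' ℝ (x + y) (hx.add hy)]
      rw [← cfc_mul _ _ _, ← cfc_const ε (x + y) (hx.add hy), ← cfc_add _ _ _]
      exact cfc_mono fun t _ => posPart_le_mul_min_add hε t
    calc (τ (x + y)⁺).re ≤ (τ ((x + y) * G + algebraMap ℝ A ε)).re :=
          re_trace_mono τ hτtrace hτpos hle
      _ = (τ (x * G)).re + (τ (y * G)).re + ε * (τ 1).re := by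
          rw [add_mul, map_add, map_add, Algebra.algebraMap_eq_smul_one,
            LinearMap.map_smul_of_tower, Complex.add_re, Complex.add_re, Complex.smul_re,
            smul_eq_mul]
      _ ≤ (τ x⁺).re + (τ y⁺).re + ε * (τ 1).re := by
          grw [re_trace_mul_le_posPart τ hτtrace hτpos hx hG₀ hG₁,
            re_trace_mul_le_posPart τ hτtrace hτpos hy hG₀ hG₁]
  refine le_of_forall_pos_le_add fun ε hε =>
    (key (ε / ((τ 1).re + 1)) (by positivity)).trans ((add_le_add_iff_left _).2 ?_)
  rw [div_mul_eq_mul_div, div_le_iff₀ (by positivity)]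
  exact mul_le_mul_of_nonneg_left (le_add_of_nonneg_right zero_le_one) hε.le

end Trace

section Moments

variable {A : Type*} [CStarAlgebra A] (τ : A →ₗ[ℂ] ℂ) {x : A} {ν : Measure ℝ} {R : ℝ}
  (hν : ∀ᵐ t ∂ν, t ∈ Icc (-R) R) (hmom : ∀ m : ℕ, τ (x ^ m) = ((∫ t, t ^ m ∂ν : ℝ) : ℂ))
include hν hmom

theorem trace_aeval_eq_integral [IsFiniteMeasure ν] (p : ℝ[X]) :
    τ (aeval x p) = ((∫ t, p.eval t ∂ν : ℝ) : ℂ) := by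
  induction p using Polynomial.induction_on' with
  | add p q hp hq =>
    simp only [map_add, hp, hq, eval_add, ← Complex.ofReal_add]
    rw [integral_add (p.continuous.integrable_of_ae_mem_Icc hν)
      (q.continuous.integrable_of_ae_mem_Icc hν)]
  | monomial n a =>
    simp only [aeval_monomial, eval_monomial, Algebra.algebraMap_eq_smul_one, smul_mul_assoc,
      one_mul, LinearMap.map_smul_of_tower, hmom, integral_const_mul, Complex.ofReal_mul,
      Complex.real_smul]

theorem trace_cfc_eq_integral [IsProbabilityMeasure ν] (hτ : Continuous τ)
    (hx : IsSelfAdjoint x) {f : ℝ → ℝ} (hf : Continuous f) :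
    τ (cfc f x) = ((∫ t, f t ∂ν : ℝ) : ℂ) := by
  obtain ⟨C, hC₀, hC⟩ := SemilinearMapClass.bound_of_continuous τ hτ
  obtain ⟨K, hσ, hνK⟩ : ∃ K, spectrum ℝ x ⊆ Icc (-K) K ∧ ∀ᵐ t ∂ν, t ∈ Icc (-K) K := by
    refine ⟨max R (‖x‖ * ‖(1 : A)‖), fun t ht => ?_, hν.mono fun t ht => ?_⟩
    · have := spectrum.subset_closedBall_norm_mul x ht
      rw [Real.closedBall_eq_Icc, zero_sub, zero_add] at this
      exact Icc_subset_Icc (neg_le_neg (le_max_right _ _)) (le_max_right _ _) this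
    · exact Icc_subset_Icc (neg_le_neg (le_max_left _ _)) (le_max_left _ _) ht
  refine eq_of_forall_dist_le fun ε hε => ?_
  set δ := ε / (C + 1)
  obtain ⟨p, hp⟩ := exists_polynomial_near_of_continuousOn (-K) K f hf.continuousOn δ
    (by positivity)
  have h₁ : ‖τ (cfc f x) - τ (aeval x p)‖ ≤ C * δ := by
    rw [← cfc_polynomial p x, ← map_sub, ← cfc_sub f _ x]
    refine (hC _).trans (mul_le_mul_of_nonneg_left (norm_cfc_le (by positivity) fun t ht => ?_)
      hC₀.le)
    rw [Real.norm_eq_abs, abs_sub_comm]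
    exact (hp t (hσ ht)).le
  have h₂ : ‖((∫ t, p.eval t ∂ν : ℝ) : ℂ) - ((∫ t, f t ∂ν : ℝ) : ℂ)‖ ≤ δ := by
    rw [← Complex.ofReal_sub, Complex.norm_real, ← integral_sub
      (p.continuous.integrable_of_ae_mem_Icc hν) (hf.integrable_of_ae_mem_Icc hν)]
    simpa using norm_integral_le_of_norm_le_const (hνK.mono fun t ht =>
      (Real.norm_eq_abs (p.eval t - f t)).trans_le (hp t ht).le)
  rw [dist_eq_norm]
  calc ‖τ (cfc f x) - ((∫ t, f t ∂ν : ℝ) : ℂ)‖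
      ≤ ‖τ (cfc f x) - τ (aeval x p)‖
        + ‖((∫ t, p.eval t ∂ν : ℝ) : ℂ) - ((∫ t, f t ∂ν : ℝ) : ℂ)‖ := by
        rw [trace_aeval_eq_integral τ hν hmom]
        exact norm_sub_le_norm_sub_add_norm_sub _ _ _
    _ ≤ C * δ + δ := add_le_add h₁ h₂
    _ = (C + 1) * δ := by ring
    _ = ε := mul_div_cancel₀ _ (by positivity)

theorem integral_posPart_const_sub_eq_re_trace [IsProbabilityMeasure ν] (hτ : Continuous τ)
    (hx : IsSelfAdjoint x) (t : ℝ) :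
    ∫ u, (t - u)⁺ ∂ν = (τ (algebraMap ℝ A t - x)⁺).re := by
  rw [← cfc_posPart_const_sub hx, trace_cfc_eq_integral τ hν hmom hτ hx (by fun_prop),
    Complex.ofReal_re]

end Moments

theorem integral_posPart_add_sub_le {A : Type*} [CStarAlgebra A] [PartialOrder A]
    [StarOrderedRing A] (τ : A →ₗ[ℂ] ℂ) (hτtrace : ∀ x y : A, τ (x * y) = τ (y * x))
    (hτpos : ∀ x : A, 0 ≤ (τ (star x * x)).re) (hτ : Continuous τ) {a b : A}
    (ha : IsSelfAdjoint a) (hb : IsSelfAdjoint b) {μa μb μab : Measure ℝ}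
    [IsProbabilityMeasure μa] [IsProbabilityMeasure μb] [IsProbabilityMeasure μab]
    {Ra Rb Rab : ℝ}
    (hRa : ∀ᵐ t ∂μa, t ∈ Icc (-Ra) Ra) (hRb : ∀ᵐ t ∂μb, t ∈ Icc (-Rb) Rb)
    (hRab : ∀ᵐ t ∂μab, t ∈ Icc (-Rab) Rab)
    (hμa : ∀ m : ℕ, τ (a ^ m) = ((∫ t, t ^ m ∂μa : ℝ) : ℂ))
    (hμb : ∀ m : ℕ, τ (b ^ m) = ((∫ t, t ^ m ∂μb : ℝ) : ℂ))
    (hμab : ∀ m : ℕ, τ ((a + b) ^ m) = ((∫ t, t ^ m ∂μab : ℝ) : ℂ)) (ta tb : ℝ) :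
    ∫ x, (ta + tb - x)⁺ ∂μab ≤ ∫ x, (ta - x)⁺ ∂μa + ∫ x, (tb - x)⁺ ∂μb := by
  have hsplit : algebraMap ℝ A (ta + tb) - (a + b) =
      (algebraMap ℝ A ta - a) + (algebraMap ℝ A tb - b) := by
    rw [map_add]; abel
  rw [integral_posPart_const_sub_eq_re_trace τ hRab hμab hτ (ha.add hb), hsplit,
    integral_posPart_const_sub_eq_re_trace τ hRa hμa hτ ha,
    integral_posPart_const_sub_eq_re_trace τ hRb hμb hτ hb]
  exact re_trace_posPart_add_le τ hτtrace hτpos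
    ((IsSelfAdjoint.algebraMap A (.all ta)).sub ha)
    ((IsSelfAdjoint.algebraMap A (.all tb)).sub hb)

theorem stmt_17_general {M : Type*} [NormedRing M] [StarRing M] [CStarRing M]
    [NormedAlgebra ℂ M] [CompleteSpace M] [StarModule ℂ M]
    (τ : M →ₗ[ℂ] ℂ)
    (hτtrace : ∀ x y : M, τ (x * y) = τ (y * x))
    (hτpos : ∀ x : M, 0 ≤ (τ (star x * x)).re ∧ (τ (star x * x)).im = 0)
    (hτcont : Continuous τ)
    (a b : M) (ha : star a = a) (hb : star b = b)
    -- the distributions of `a`, `b` and `a + b`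
    (μa μb μab : Measure ℝ)
    [IsProbabilityMeasure μa] [IsProbabilityMeasure μb] [IsProbabilityMeasure μab]
    (hμacpt : ∃ R : ℝ, μa {t : ℝ | R < |t|} = 0)
    (hμbcpt : ∃ R : ℝ, μb {t : ℝ | R < |t|} = 0)
    (hμabcpt : ∃ R : ℝ, μab {t : ℝ | R < |t|} = 0)
    (hμa : ∀ m : ℕ, τ (a ^ m) = ((∫ t, t ^ m ∂μa : ℝ) : ℂ))
    (hμb : ∀ m : ℕ, τ (b ^ m) = ((∫ t, t ^ m ∂μb : ℝ) : ℂ))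
    (hμab : ∀ m : ℕ, τ ((a + b) ^ m) = ((∫ t, t ^ m ∂μab : ℝ) : ℂ)) :
    (∀ s ∈ Set.Ico (0 : ℝ) 1,
      (∫ u in Set.Ico (0 : ℝ) s, quantileFun μa u) +
        (∫ u in Set.Ico (0 : ℝ) s, quantileFun μb u) ≤
      ∫ u in Set.Ico (0 : ℝ) s, quantileFun μab u) ∧
    (∫ u in Set.Ico (0 : ℝ) 1, quantileFun μab u) =
      (∫ u in Set.Ico (0 : ℝ) 1, quantileFun μa u) +
        (∫ u in Set.Ico (0 : ℝ) 1, quantileFun μb u) ∧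
    (∫ u in Set.Ico (0 : ℝ) 1, quantileFun μab u) = (τ a).re + (τ b).re := by
  let _ : CStarAlgebra M := {}
  let _ := CStarAlgebra.spectralOrder M
  have _ := CStarAlgebra.spectralOrderedRing M
  replace ha : IsSelfAdjoint a := ha
  replace hb : IsSelfAdjoint b := hb
  obtain ⟨Ra, hRa⟩ := hμacpt
  obtain ⟨Rb, hRb⟩ := hμbcpt
  obtain ⟨Rab, hRab⟩ := hμabcpt
  replace hRa := ae_mem_Icc_of_measure_lt_abs_eq_zero hRa
  replace hRb := ae_mem_Icc_of_measure_lt_abs_eq_zero hRb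
  replace hRab := ae_mem_Icc_of_measure_lt_abs_eq_zero hRab
  have hmean_a : ∫ u in Ico 0 1, quantileFun μa u = (τ a).re := by
    rw [setIntegral_quantileFun_eq_integral hRa]
    simpa using congrArg Complex.re (hμa 1).symm
  have hmean_b : ∫ u in Ico 0 1, quantileFun μb u = (τ b).re := by
    rw [setIntegral_quantileFun_eq_integral hRb]
    simpa using congrArg Complex.re (hμb 1).symm
  have hmean_ab : ∫ u in Ico 0 1, quantileFun μab u = (τ a).re + (τ b).re := by
    rw [setIntegral_quantileFun_eq_integral hRab, ← Complex.add_re, ← map_add]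
    simpa using congrArg Complex.re (hμab 1).symm
  refine ⟨fun s hs => ?_, by rw [hmean_a, hmean_b, hmean_ab], hmean_ab⟩
  exact setIntegral_quantileFun_add_le hRa hRb hRab (integral_posPart_add_sub_le τ hτtrace
    (fun x => (hτpos x).1) hτcont ha hb hRa hRb hRab hμa hμb hμab) hs

theorem stmt_17 {M : Type*} [NormedRing M] [StarRing M] [CStarRing M]
    [NormedAlgebra ℂ M] [CompleteSpace M] [StarModule ℂ M]
    (τ : M →ₗ[ℂ] ℂ) (hτ1 : τ 1 = 1)
    (hτtrace : ∀ x y : M, τ (x * y) = τ (y * x))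
    (hτpos : ∀ x : M, 0 ≤ (τ (star x * x)).re ∧ (τ (star x * x)).im = 0)
    (hτfaithful : ∀ x : M, τ (star x * x) = 0 → x = 0)
    (hτcont : Continuous τ)
    (a b : M) (ha : star a = a) (hb : star b = b)
    -- the distributions of `a`, `b` and `a + b`
    (μa μb μab : Measure ℝ)
    [IsProbabilityMeasure μa] [IsProbabilityMeasure μb] [IsProbabilityMeasure μab]
    [NullSingletonClass μa] [NullSingletonClass μb] [NullSingletonClass μab]
    (hμacpt : ∃ R : ℝ, μa {t : ℝ | R < |t|} = 0)
    (hμbcpt : ∃ R : ℝ, μb {t : ℝ | R < |t|} = 0)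
    (hμabcpt : ∃ R : ℝ, μab {t : ℝ | R < |t|} = 0)
    (hμa : ∀ m : ℕ, τ (a ^ m) = ((∫ t, t ^ m ∂μa : ℝ) : ℂ))
    (hμb : ∀ m : ℕ, τ (b ^ m) = ((∫ t, t ^ m ∂μb : ℝ) : ℂ))
    (hμab : ∀ m : ℕ, τ ((a + b) ^ m) = ((∫ t, t ^ m ∂μab : ℝ) : ℂ)) :
    (∀ s ∈ Set.Ico (0 : ℝ) 1,
      (∫ u in Set.Ico (0 : ℝ) s, quantileFun μa u) +
        (∫ u in Set.Ico (0 : ℝ) s, quantileFun μb u) ≤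
      ∫ u in Set.Ico (0 : ℝ) s, quantileFun μab u) ∧
    (∫ u in Set.Ico (0 : ℝ) 1, quantileFun μab u) =
      (∫ u in Set.Ico (0 : ℝ) 1, quantileFun μa u) +
        (∫ u in Set.Ico (0 : ℝ) 1, quantileFun μb u) ∧
    (∫ u in Set.Ico (0 : ℝ) 1, quantileFun μab u) = (τ a).re + (τ b).re :=
  stmt_17_general τ hτtrace hτpos hτcont a b ha hb μa μb μab hμacpt hμbcpt hμabcpt hμa hμb hμab
end
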